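/- arXiv:2501.01053 — 3 statements merged into one kernel-verified Lean document; each statement's English description precedes it below -/
import Mathlib

section
/- The map R ↦ Tr[(Σ⁻¹ + c·R)⁻¹] is strictly convex on the set of Hermitian positive semidefinite matrices R, where Σ is a fixed Hermitian positive definite matrix and c > 0 is a constant. That is, for Hermitian positive semidefinite R₁ ≠ R₂ and t ∈ (0,1), Tr[(Σ⁻¹ + c(tR₁ + (1−t)R₂))⁻¹] < t·Tr[(Σ⁻¹ + cR₁)⁻¹] + (1−t)·Tr[(Σ⁻¹ + cR₂)⁻¹]. -/
/-!
For `M` positive definite and `X` Hermitian, completing the square gives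
`Tr M⁻¹ - Re Tr (2X - XMX) = Re Tr ((X - M⁻¹) M (X - M⁻¹)) ≥ 0`, with equality only at `X = M⁻¹`.
So `M ↦ Re Tr M⁻¹` is the pointwise maximum of the affine functions `M ↦ Re Tr (2X - XMX)`,
hence convex; at `C = a A + b B` the maximiser `X = C⁻¹` cannot equal both `A⁻¹` and `B⁻¹`
when `A ≠ B`, which makes the inequality strict. The theorem follows by composing with the
injective affine map `R ↦ Σ⁻¹ + c R`.
-/

open Matrix
open scoped ComplexOrder

namespace Matrix

variable {ι κ 𝕜 : Type*} [RCLike 𝕜]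

lemma convex_setOf_posDef : Convex ℝ {M : Matrix ι ι 𝕜 | M.PosDef} :=
  convex_iff_pairwise_pos.mpr fun _ hA _ hB _ _ _ ha hb _ ↦ (hA.smul ha).add (hB.smul hb)

variable [Fintype ι]

lemma PosDef.conjTranspose_mul_mul_same_eq_zero_iff [Fintype κ] {M : Matrix ι ι 𝕜}
    (hM : M.PosDef) {D : Matrix ι κ 𝕜} : Dᴴ * M * D = 0 ↔ D = 0 := by
  refine ⟨fun h ↦ ext_iff_mulVec.mpr fun x ↦ ?_, fun h ↦ by simp [h]⟩
  rw [zero_mulVec]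
  by_contra hx
  have := hM.dotProduct_mulVec_pos hx
  rw [star_mulVec, ← dotProduct_mulVec, mulVec_mulVec, mulVec_mulVec, h, zero_mulVec,
    dotProduct_zero] at this
  exact lt_irrefl _ this

lemma PosDef.re_trace_conjTranspose_mul_mul_same_pos [Fintype κ] {M : Matrix ι ι 𝕜}
    (hM : M.PosDef) {D : Matrix ι κ 𝕜} (hD : D ≠ 0) : 0 < RCLike.re (Dᴴ * M * D).trace := by
  have hpsd := hM.posSemidef.conjTranspose_mul_mul_same D
  have hne : (Dᴴ * M * D).trace ≠ 0 := by
    rwa [Ne, hpsd.trace_eq_zero_iff, hM.conjTranspose_mul_mul_same_eq_zero_iff]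
  exact (RCLike.pos_iff.mp (lt_of_le_of_ne hpsd.trace_nonneg hne.symm)).1

lemma re_trace_two_smul_sub_mul_add_mul (X A B : Matrix ι ι 𝕜) {a b : ℝ} (hab : a + b = 1) :
    RCLike.re (2 • X - X * (a • A + b • B) * X).trace
      = a * RCLike.re (2 • X - X * A * X).trace + b * RCLike.re (2 • X - X * B * X).trace := by
  simp only [Matrix.mul_add, Matrix.add_mul, Matrix.mul_smul, Matrix.smul_mul, trace_sub,
    trace_add, trace_smul, map_sub, map_add, RCLike.smul_re]
  linear_combination -RCLike.re (2 • X.trace) * hab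

variable [DecidableEq ι] {M X : Matrix ι ι 𝕜}

lemma PosDef.trace_inv_sub_eq_trace_conjTranspose_mul_mul (hM : M.PosDef) (hX : X.IsHermitian) :
    (M⁻¹).trace - (2 • X - X * M * X).trace = ((X - M⁻¹)ᴴ * M * (X - M⁻¹)).trace := by
  have hdet : IsUnit M.det := M.isUnit_iff_isUnit_det.mp hM.isUnit
  rw [conjTranspose_sub, hX.eq, hM.inv.isHermitian.eq]
  simp only [sub_mul, mul_sub, nonsing_inv_mul _ hdet, Matrix.one_mul,
    mul_nonsing_inv_cancel_right _ _ hdet, trace_sub, trace_add, two_smul]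
  ring

lemma PosDef.re_trace_two_smul_sub_le_re_trace_inv (hM : M.PosDef) (hX : X.IsHermitian) :
    RCLike.re (2 • X - X * M * X).trace ≤ RCLike.re (M⁻¹).trace := by
  have := (hM.posSemidef.conjTranspose_mul_mul_same (X - M⁻¹)).trace_nonneg
  rw [← hM.trace_inv_sub_eq_trace_conjTranspose_mul_mul hX] at this
  simpa [sub_nonneg] using RCLike.re_le_re this

lemma PosDef.re_trace_two_smul_sub_lt_re_trace_inv (hM : M.PosDef) (hX : X.IsHermitian)
    (hXM : X ≠ M⁻¹) : RCLike.re (2 • X - X * M * X).trace < RCLike.re (M⁻¹).trace := by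
  have := hM.re_trace_conjTranspose_mul_mul_same_pos (sub_ne_zero.mpr hXM)
  rw [← hM.trace_inv_sub_eq_trace_conjTranspose_mul_mul hX, map_sub] at this
  linarith

theorem strictConvexOn_re_trace_inv :
    StrictConvexOn ℝ {M : Matrix ι ι 𝕜 | M.PosDef} fun M ↦ RCLike.re (M⁻¹).trace := by
  refine ⟨convex_setOf_posDef, fun A hA B hB hAB a b ha hb hab ↦ ?_⟩
  have hC : (a • A + b • B).PosDef := convex_setOf_posDef hA hB ha.le hb.le hab
  set X := (a • A + b • B)⁻¹
  have hX : X.IsHermitian := hC.inv.isHermitian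
  have hXAB : X ≠ A⁻¹ ∨ X ≠ B⁻¹ := by
    by_contra! h
    exact hAB (inv_inj (h.1.symm.trans h.2) (A.isUnit_iff_isUnit_det.mp hA.isUnit))
  calc RCLike.re X.trace = RCLike.re (2 • X - X * (a • A + b • B) * X).trace := by
        rw [nonsing_inv_mul _ ((a • A + b • B).isUnit_iff_isUnit_det.mp hC.isUnit),
          Matrix.one_mul, two_smul, add_sub_cancel_right]
    _ = a * RCLike.re (2 • X - X * A * X).trace + b * RCLike.re (2 • X - X * B * X).trace :=
        re_trace_two_smul_sub_mul_add_mul X A B hab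
    _ < a * RCLike.re (A⁻¹).trace + b * RCLike.re (B⁻¹).trace := by
        rcases hXAB with hXA | hXB
        · exact add_lt_add_of_lt_of_le
            (mul_lt_mul_of_pos_left (hA.re_trace_two_smul_sub_lt_re_trace_inv hX hXA) ha)
            (mul_le_mul_of_nonneg_left (hB.re_trace_two_smul_sub_le_re_trace_inv hX) hb.le)
        · exact add_lt_add_of_le_of_lt
            (mul_le_mul_of_nonneg_left (hA.re_trace_two_smul_sub_le_re_trace_inv hX) ha.le)
            (mul_lt_mul_of_pos_left (hB.re_trace_two_smul_sub_lt_re_trace_inv hX hXB) hb)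

end Matrix

/-- The map `R ↦ Tr[(Σ⁻¹ + c·R)⁻¹]` is strictly convex on Hermitian positive semidefinite
matrices, for `Σ` Hermitian positive definite and `c > 0`. -/
theorem stmt_1 {n : ℕ} (S : Matrix (Fin n) (Fin n) ℂ) (hS : S.PosDef)
    (c : ℝ) (hc : 0 < c)
    (R₁ R₂ : Matrix (Fin n) (Fin n) ℂ) (hR₁ : R₁.PosSemidef) (hR₂ : R₂.PosSemidef)
    (hne : R₁ ≠ R₂) (t : ℝ) (ht0 : 0 < t) (ht1 : t < 1) :
    (((S⁻¹ + (c : ℂ) • ((t : ℂ) • R₁ + ((1 - t : ℝ) : ℂ) • R₂))⁻¹).trace).re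
      < t * (((S⁻¹ + (c : ℂ) • R₁)⁻¹).trace).re
        + (1 - t) * (((S⁻¹ + (c : ℂ) • R₂)⁻¹).trace).re := by
  have hc' : (0 : ℂ) ≤ c := Complex.zero_le_real.mpr hc.le
  have hA : (S⁻¹ + (c : ℂ) • R₁).PosDef := hS.inv.add_posSemidef (hR₁.smul hc')
  have hB : (S⁻¹ + (c : ℂ) • R₂).PosDef := hS.inv.add_posSemidef (hR₂.smul hc')
  have hAB : S⁻¹ + (c : ℂ) • R₁ ≠ S⁻¹ + (c : ℂ) • R₂ := fun h ↦
    hne (smul_right_injective _ (Complex.ofReal_ne_zero.mpr hc.ne') (add_left_cancel h))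
  have hC : S⁻¹ + (c : ℂ) • ((t : ℂ) • R₁ + ((1 - t : ℝ) : ℂ) • R₂)
      = t • (S⁻¹ + (c : ℂ) • R₁) + (1 - t) • (S⁻¹ + (c : ℂ) • R₂) := by
    simp only [← Complex.coe_smul]
    module
  rw [hC]
  exact strictConvexOn_re_trace_inv.2 hA hB hAB ht0 (sub_pos.mpr ht1) (add_sub_cancel t 1)
end

section
/- Diagonal water-filling optimality: let λ₁,…,λ_N > 0 and P > 0. The minimum of Σᵢ 1/(1/λᵢ + fᵢ) over nonnegative reals f₁,…,f_N with Σᵢ fᵢ = P is attained at fᵢ = (k − 1/λᵢ)⁺, where k is the unique constant with Σᵢ (k − 1/λᵢ)⁺ = P, and the minimum value is Σᵢ λᵢ / ((k·λᵢ − 1)⁺ + 1). -/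
/-!
Write `aᵢ = 1/λᵢ` and `gᵢ = (k - aᵢ)⁺`, so that `aᵢ + gᵢ = max aᵢ k`. Each summand
`x ↦ 1/(aᵢ + x)` is convex, so it lies above its tangent line at `gᵢ`, whose slope is
`-1/(max aᵢ k)²`. This slope is `-1/k²` where `gᵢ > 0` and at least `-1/k²` where `gᵢ = 0`
(there `aᵢ ≥ k`, and `fᵢ - gᵢ = fᵢ ≥ 0`). These are the KKT conditions with multiplier
`1/k²`: summing the tangent-line bounds, the objective at any feasible `f` exceeds its value
at `g` by at least `(Σ fᵢ - Σ gᵢ)/k² = 0`.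
-/

open Finset

lemma add_max_zero_sub {α : Type*} [AddCommGroup α] [LinearOrder α] [IsOrderedAddMonoid α]
    (a k : α) : a + max 0 (k - a) = max a k := by
  rw [add_max, add_zero, add_sub_cancel]

lemma one_div_sub_div_sq_le_one_div {b c : ℝ} (hb : 0 < b) (hc : 0 < c) :
    1 / b - (c - b) / b ^ 2 ≤ 1 / c := by
  have hgap : 1 / c - (1 / b - (c - b) / b ^ 2) = (c - b) ^ 2 / (b ^ 2 * c) := by
    field_simp
    ring
  have : 0 ≤ (c - b) ^ 2 / (b ^ 2 * c) := by positivity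
  linarith

lemma div_max_sq_le_div_sq {a k f : ℝ} (hk : 0 < k) (hf : 0 ≤ f) :
    (f - max 0 (k - a)) / max a k ^ 2 ≤ (f - max 0 (k - a)) / k ^ 2 := by
  rcases le_or_gt k a with hka | hak
  · rw [max_eq_left (sub_nonpos.2 hka), max_eq_left hka, sub_zero]
    gcongr
  · rw [max_eq_right hak.le]

lemma one_div_add_max_zero_sub_le {a k f : ℝ} (ha : 0 < a) (hk : 0 < k) (hf : 0 ≤ f) :
    1 / (a + max 0 (k - a)) ≤ 1 / (a + f) + (f - max 0 (k - a)) / k ^ 2 := by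
  have htangent := one_div_sub_div_sq_le_one_div (lt_max_of_lt_left ha : 0 < max a k)
    (by positivity : 0 < a + f)
  have hslope := div_max_sq_le_div_sq (a := a) hk hf
  rw [add_max_zero_sub]
  rw [show a + f - max a k = f - max 0 (k - a) by rw [← add_max_zero_sub]; ring] at htangent
  linarith

lemma pos_of_sum_max_zero_sub_pos {ι : Type*} {s : Finset ι} {a : ι → ℝ} {k : ℝ}
    (ha : ∀ i ∈ s, 0 < a i) (h : 0 < ∑ i ∈ s, max 0 (k - a i)) : 0 < k := by
  obtain ⟨i, hi, hpos⟩ := exists_lt_of_sum_lt (f := fun _ ↦ (0 : ℝ)) (by simpa using h)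
  have := (lt_max_iff.1 hpos).resolve_left (lt_irrefl 0)
  linarith [ha i hi]

theorem sum_one_div_add_max_zero_sub_le {ι : Type*} (s : Finset ι) {a f : ι → ℝ} {k : ℝ}
    (ha : ∀ i ∈ s, 0 < a i) (hk : 0 < k) (hf : ∀ i ∈ s, 0 ≤ f i)
    (hsum : ∑ i ∈ s, f i = ∑ i ∈ s, max 0 (k - a i)) :
    ∑ i ∈ s, 1 / (a i + max 0 (k - a i)) ≤ ∑ i ∈ s, 1 / (a i + f i) :=
  calc ∑ i ∈ s, 1 / (a i + max 0 (k - a i))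
      ≤ ∑ i ∈ s, (1 / (a i + f i) + (f i - max 0 (k - a i)) / k ^ 2) :=
        sum_le_sum fun i hi ↦ one_div_add_max_zero_sub_le (ha i hi) hk (hf i hi)
    _ = ∑ i ∈ s, 1 / (a i + f i)
          + (∑ i ∈ s, f i - ∑ i ∈ s, max 0 (k - a i)) / k ^ 2 := by
        rw [sum_add_distrib, ← sum_div, sum_sub_distrib]
    _ = ∑ i ∈ s, 1 / (a i + f i) := by rw [hsum, sub_self, zero_div, add_zero]

lemma one_div_inv_add_max_zero_sub {l : ℝ} (hl : 0 < l) (k : ℝ) :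
    1 / (1 / l + max 0 (k - 1 / l)) = l / (max 0 (k * l - 1) + 1) := by
  rw [add_max_zero_sub, ← max_add_add_right, zero_add, sub_add_cancel,
    show k * l = l * k by ring, ← mul_one_div_cancel hl.ne', ← mul_max_of_nonneg _ _ hl.le]
  field_simp

/-- Diagonal water-filling optimality: for `λᵢ > 0` and `P > 0`, the minimum of
`Σᵢ 1/(1/λᵢ + fᵢ)` over nonnegative `fᵢ` with `Σᵢ fᵢ = P` is attained at
`fᵢ = (k − 1/λᵢ)⁺` where `k` satisfies `Σᵢ (k − 1/λᵢ)⁺ = P`, and the minimum value is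
`Σᵢ λᵢ/((k·λᵢ − 1)⁺ + 1)`. -/
theorem stmt_6 {N : ℕ} (l : Fin N → ℝ) (hl : ∀ i, 0 < l i) (P : ℝ) (hP : 0 < P)
    (k : ℝ) (hk : ∑ i, max 0 (k - 1 / l i) = P) :
    IsLeast {v : ℝ | ∃ f : Fin N → ℝ, (∀ i, 0 ≤ f i) ∧ (∑ i, f i = P) ∧
        v = ∑ i, 1 / (1 / l i + f i)}
      (∑ i, l i / (max 0 (k * l i - 1) + 1)) ∧
    (∑ i, 1 / (1 / l i + max 0 (k - 1 / l i)))
      = ∑ i, l i / (max 0 (k * l i - 1) + 1) := by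
  have hnoise : ∀ i ∈ univ, 0 < 1 / l i := fun i _ ↦ one_div_pos.2 (hl i)
  have hk0 : 0 < k := pos_of_sum_max_zero_sub_pos hnoise (hk ▸ hP)
  have hvalue : ∑ i, 1 / (1 / l i + max 0 (k - 1 / l i))
      = ∑ i, l i / (max 0 (k * l i - 1) + 1) :=
    sum_congr rfl fun i _ ↦ one_div_inv_add_max_zero_sub (hl i) k
  refine ⟨⟨⟨fun i ↦ max 0 (k - 1 / l i), fun i ↦ le_max_left _ _, hk, hvalue.symm⟩, ?_⟩,
    hvalue⟩
  rintro v ⟨f, hf, hfsum, rfl⟩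
  rw [← hvalue]
  exact sum_one_div_add_max_zero_sub_le univ hnoise hk0 (fun i _ ↦ hf i) (hfsum.trans hk.symm)
end

section
/- The minimum over X ∈ ℂ^{N×T} (with T ≥ N) of Tr[(Σ⁻¹ + σ⁻² X X†)⁻¹] subject to Tr(X X†) = T·N·P₀ equals Σᵢ λᵢ/((λᵢ σ⁻² η − 1)⁺ + 1), where λᵢ are the eigenvalues of Σ and η is chosen so that Σᵢ (η − σ²/λᵢ)⁺ = T·N·P₀; the minimum is achieved by X = U P^{1/2} Ψ where Σ = UΛU†, P = diag((η − σ²/λᵢ)⁺), and Ψ ∈ ℂ^{N×T} is any matrix with orthonormal rows (ΨΨ† = I_N). -/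
open Matrix Finset
open scoped ComplexOrder

/-!
Conjugating by `U` turns `Σ⁻¹ + σ⁻² X X†` into `Λ⁻¹ + σ⁻² W W†` with `W = U† X`, changing
neither the trace of its inverse nor the power `Tr(X X†) = ∑ᵢ pᵢ`, where `pᵢ = (W W†)ᵢᵢ ≥ 0`.
For positive definite `M`, Cauchy–Schwarz in the inner product `x† M y` applied to `eᵢ` and
`M⁻¹ eᵢ` gives `(M⁻¹)ᵢᵢ ≥ 1 / Mᵢᵢ`, so the objective is at least `∑ᵢ (λᵢ⁻¹ + σ⁻² pᵢ)⁻¹`, with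
equality when `W W†` is diagonal, as it is for `X = U P^{1/2} Ψ`. The remaining scalar problem
is water-filling: by convexity each term lies above the line of slope `-σ²/η²` through its value
at `pᵢ* = (η - σ²/λᵢ)⁺` (the KKT conditions), and the power constraint `∑ pᵢ = ∑ pᵢ*` cancels
the linear parts.
-/

lemma inv_sub_div_sq_le_inv {b q : ℝ} (hb : 0 < b) (hq : 0 < q) : b⁻¹ - (q - b) / b ^ 2 ≤ q⁻¹ := by
  rw [show b⁻¹ - (q - b) / b ^ 2 = (2 * b - q) / b ^ 2 by field_simp; ring,
    div_le_iff₀ (by positivity), inv_mul_eq_div, le_div_iff₀ hq]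
  nlinarith [sq_nonneg (q - b)]

lemma waterfill_term_le {l s η p : ℝ} (hl : 0 < l) (hs : 0 < s) (hη : 0 < η) (hp : 0 ≤ p) :
    (l⁻¹ + s⁻¹ * max 0 (η - s / l))⁻¹ + s / η ^ 2 * max 0 (η - s / l) ≤
      (l⁻¹ + s⁻¹ * p)⁻¹ + s / η ^ 2 * p := by
  have tangent := inv_sub_div_sq_le_inv (b := l⁻¹ + s⁻¹ * max 0 (η - s / l))
    (q := l⁻¹ + s⁻¹ * p) (by positivity) (by positivity)
  rcases le_total (η - s / l) 0 with h | h
  · rw [max_eq_left h] at tangent ⊢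
    have hηl : η * l ≤ s := by rw [sub_nonpos, le_div_iff₀ hl] at h; exact h
    have hslope : s⁻¹ * p / (l⁻¹) ^ 2 ≤ s / η ^ 2 * p := by
      rw [div_mul_eq_mul_div, div_le_div_iff₀ (by positivity) (by positivity)]
      field_simp
      nlinarith [mul_le_mul hηl hηl (by positivity) hs.le, mul_nonneg hp hs.le]
    simp only [mul_zero, add_zero, add_sub_cancel_left] at tangent ⊢
    linarith
  · rw [max_eq_right h] at tangent ⊢
    have hb : l⁻¹ + s⁻¹ * (η - s / l) = η / s := by field_simp; ring
    rw [hb] at tangent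
    have hslope : (l⁻¹ + s⁻¹ * p - η / s) / (η / s) ^ 2 = s / η ^ 2 * (p - (η - s / l)) := by
      field_simp; ring
    rw [hb]
    nlinarith

theorem sum_waterfill_le {ι : Type*} [Fintype ι] {l : ι → ℝ} (hl : ∀ i, 0 < l i) {s : ℝ}
    (hs : 0 < s) (η : ℝ) {p : ι → ℝ} (hp : ∀ i, 0 ≤ p i)
    (hsum : ∑ i, p i = ∑ i, max 0 (η - s / l i)) :
    ∑ i, ((l i)⁻¹ + s⁻¹ * max 0 (η - s / l i))⁻¹ ≤ ∑ i, ((l i)⁻¹ + s⁻¹ * p i)⁻¹ := by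
  rcases le_or_gt η 0 with hη | hη
  · have hzero : ∀ i, max 0 (η - s / l i) = 0 := fun i =>
      max_eq_left (by linarith [div_pos hs (hl i)])
    simp only [hzero, sum_const_zero] at hsum
    have hp0 : ∀ i, p i = 0 := fun i =>
      (sum_eq_zero_iff_of_nonneg fun i _ => hp i).mp hsum i (mem_univ i)
    simp [hzero, hp0]
  · have hterm := sum_le_sum fun i (_ : i ∈ univ) => waterfill_term_le (hl i) hs hη (hp i)
    rw [sum_add_distrib, sum_add_distrib, ← mul_sum, ← mul_sum, hsum] at hterm
    linarith

lemma waterfill_value {l s : ℝ} (hl : 0 < l) (hs : 0 < s) (η : ℝ) :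
    (l⁻¹ + s⁻¹ * max 0 (η - s / l))⁻¹ = l / (max 0 (l * s⁻¹ * η - 1) + 1) := by
  have key : l * s⁻¹ * max 0 (η - s / l) = max 0 (l * s⁻¹ * η - 1) := by
    rw [mul_max_of_nonneg _ _ (by positivity), mul_zero]
    congr 1
    field_simp
  rw [← key]
  field_simp
  ring

namespace Matrix

section Unitary

variable {n : Type*} [Fintype n] [DecidableEq n] {R : Type*} [CommRing R] [StarRing R]
  {U : Matrix n n R}

lemma inv_unitary_conj (hU : U ∈ unitaryGroup n R) (A : Matrix n n R) :
    (U * A * Uᴴ)⁻¹ = U * A⁻¹ * Uᴴ := by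
  have hU_inv : U⁻¹ = Uᴴ := inv_eq_left_inv (mem_unitaryGroup_iff'.mp hU)
  have hUH_inv : Uᴴ⁻¹ = U := inv_eq_left_inv (mem_unitaryGroup_iff.mp hU)
  rw [mul_inv_rev, mul_inv_rev, hU_inv, hUH_inv, Matrix.mul_assoc]

lemma trace_unitary_conj (hU : U ∈ unitaryGroup n R) (A : Matrix n n R) :
    (U * A * Uᴴ).trace = A.trace := by
  rw [trace_mul_cycle, ← star_eq_conjTranspose, mem_unitaryGroup_iff'.mp hU, Matrix.one_mul]

end Unitary

lemma submatrix_one_mul_conjTranspose_self {m n R : Type*} [Fintype n] [DecidableEq m]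
    [DecidableEq n] [Semiring R] [StarRing R] {e : m → n} (he : Function.Injective e) :
    (1 : Matrix n n R).submatrix e id * ((1 : Matrix n n R).submatrix e id)ᴴ = 1 := by
  rw [conjTranspose_submatrix, conjTranspose_one, ← submatrix_mul _ _ e id e Function.bijective_id,
    Matrix.one_mul, submatrix_one e he]

section PosDef

open RCLike

variable {𝕜 : Type*} [RCLike 𝕜] {n : Type*} [Fintype n] [DecidableEq n] {M : Matrix n n 𝕜}

lemma PosDef.one_le_re_diag_mul_re_inv_diag (hM : M.PosDef) (i : n) :
    1 ≤ re (M i i) * re (M⁻¹ i i) := by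
  let := M.toSeminormedAddCommGroup hM.posSemidef
  let := M.toInnerProductSpace hM.posSemidef
  set e : n → 𝕜 := Pi.single i 1
  have cauchy_schwarz := inner_mul_inner_self_le (𝕜 := 𝕜) e (M⁻¹ *ᵥ e)
  rw [norm_inner_symm (M⁻¹ *ᵥ e) e] at cauchy_schwarz
  have hMM : M *ᵥ (M⁻¹ *ᵥ e) = e := by
    rw [mulVec_mulVec, mul_nonsing_inv M ((isUnit_iff_isUnit_det _).mp hM.isUnit), one_mulVec]
  -- the inner product of `M.toInnerProductSpace` is `⟪x, y⟫ = (M *ᵥ y) ⬝ᵥ star x`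
  change ‖(M *ᵥ (M⁻¹ *ᵥ e)) ⬝ᵥ star e‖ * ‖(M *ᵥ (M⁻¹ *ᵥ e)) ⬝ᵥ star e‖
    ≤ re ((M *ᵥ e) ⬝ᵥ star e) * re ((M *ᵥ (M⁻¹ *ᵥ e)) ⬝ᵥ star (M⁻¹ *ᵥ e)) at cauchy_schwarz
  rw [hMM] at cauchy_schwarz
  simpa [e, mulVec_single, dotProduct_single, single_dotProduct] using cauchy_schwarz

lemma PosDef.sum_inv_re_diag_le_re_trace_inv (hM : M.PosDef) :
    ∑ i, (re (M i i))⁻¹ ≤ re M⁻¹.trace := by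
  rw [trace, map_sum]
  refine sum_le_sum fun i _ => ?_
  rw [inv_le_iff_one_le_mul₀' (RCLike.pos_iff.mp hM.diag_pos).1]
  exact hM.one_le_re_diag_mul_re_inv_diag i

end PosDef

lemma inv_diagonal_of_ne_zero {n K : Type*} [Fintype n] [DecidableEq n] [Field K] {v : n → K}
    (hv : ∀ i, v i ≠ 0) : (diagonal v)⁻¹ = diagonal fun i => (v i)⁻¹ :=
  inv_eq_left_inv <| by
    rw [diagonal_mul_diagonal, ← diagonal_one]
    exact congrArg diagonal (funext fun i => inv_mul_cancel₀ (hv i))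

section Sensing

variable {n m : Type*} [Fintype n] [DecidableEq n] [Fintype m] {U : Matrix n n ℂ}
  {l : n → ℝ} {S : Matrix n n ℂ}

lemma trace_inv_add_smul_unitary_conj (hU : U ∈ unitaryGroup n ℂ) (hl : ∀ i, l i ≠ 0)
    (hS : S = U * diagonal (fun i => (l i : ℂ)) * Uᴴ) (c : ℂ) (B : Matrix n n ℂ) :
    (S⁻¹ + c • (U * B * Uᴴ))⁻¹.trace = (diagonal (fun i => (l i : ℂ)⁻¹) + c • B)⁻¹.trace := by
  have hconj : S⁻¹ + c • (U * B * Uᴴ) = U * (diagonal (fun i => (l i : ℂ)⁻¹) + c • B) * Uᴴ := by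
    rw [hS, inv_unitary_conj hU,
      inv_diagonal_of_ne_zero fun i => Complex.ofReal_ne_zero.mpr (hl i),
      Matrix.mul_add, Matrix.add_mul, Matrix.mul_smul, Matrix.smul_mul]
  rw [hconj, inv_unitary_conj hU, trace_unitary_conj hU]

lemma sum_inv_le_re_trace_inv (hU : U ∈ unitaryGroup n ℂ) (hl : ∀ i, 0 < l i)
    (hS : S = U * diagonal (fun i => (l i : ℂ)) * Uᴴ) {s : ℝ} (hs : 0 ≤ s)
    (X : Matrix n m ℂ) :
    ∑ i, ((l i)⁻¹ + s⁻¹ * (((Uᴴ * X) * (Uᴴ * X)ᴴ) i i).re)⁻¹ ≤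
      ((S⁻¹ + (s : ℂ)⁻¹ • (X * Xᴴ))⁻¹.trace).re := by
  set B := (Uᴴ * X) * (Uᴴ * X)ᴴ
  have hXX : X * Xᴴ = U * B * Uᴴ := by
    have hUUX : U * (Uᴴ * X) = X := by
      rw [← Matrix.mul_assoc, show U * Uᴴ = 1 from mem_unitaryGroup_iff.mp hU, Matrix.one_mul]
    conv_lhs => rw [← hUUX]
    simp only [B, conjTranspose_mul, Matrix.mul_assoc]
  have hpos : (diagonal (fun i => (l i : ℂ)⁻¹) + (s : ℂ)⁻¹ • B).PosDef := by
    refine PosDef.add_posSemidef (PosDef.diagonal fun i => ?_)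
      ((posSemidef_self_mul_conjTranspose _).smul ?_)
    · rw [← Complex.ofReal_inv]; exact Complex.zero_lt_real.mpr (inv_pos.mpr (hl i))
    · rw [← Complex.ofReal_inv]; exact Complex.zero_le_real.mpr (inv_nonneg.mpr hs)
  rw [hXX, trace_inv_add_smul_unitary_conj hU (fun i => (hl i).ne') hS]
  refine le_of_eq_of_le (sum_congr rfl fun i _ => ?_) hpos.sum_inv_re_diag_le_re_trace_inv
  simp [← Complex.ofReal_inv]

lemma sum_re_diag_conjTranspose_mul_mul_conjTranspose (hU : U ∈ unitaryGroup n ℂ)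
    (X : Matrix n m ℂ) : ∑ i, (((Uᴴ * X) * (Uᴴ * X)ᴴ) i i).re = ((X * Xᴴ).trace).re := by
  rw [← Complex.re_sum, conjTranspose_mul, conjTranspose_conjTranspose]
  change ((Uᴴ * X * (Xᴴ * U)).trace).re = _
  rw [← Matrix.mul_assoc, trace_mul_cycle, ← Matrix.mul_assoc U,
    show U * Uᴴ = 1 from mem_unitaryGroup_iff.mp hU, Matrix.one_mul]

lemma mul_conjTranspose_diagonal_sqrt_mul {p : n → ℝ} (hp : ∀ i, 0 ≤ p i) {Ψ : Matrix n m ℂ}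
    (hΨ : Ψ * Ψᴴ = 1) :
    (U * diagonal (fun i => (√(p i) : ℂ)) * Ψ) * (U * diagonal (fun i => (√(p i) : ℂ)) * Ψ)ᴴ =
      U * diagonal (fun i => (p i : ℂ)) * Uᴴ := by
  have hD : (diagonal fun i => (√(p i) : ℂ))ᴴ = diagonal fun i => (√(p i) : ℂ) := by
    simp [diagonal_conjTranspose]
  have hDD : (diagonal fun i => (√(p i) : ℂ)) * (diagonal fun i => (√(p i) : ℂ)) =
      diagonal fun i => (p i : ℂ) := by
    simp [diagonal_mul_diagonal, ← Complex.ofReal_mul, Real.mul_self_sqrt (hp _)]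
  rw [conjTranspose_mul, conjTranspose_mul, hD]
  simp only [Matrix.mul_assoc]
  rw [← Matrix.mul_assoc Ψ, hΨ, Matrix.one_mul, ← Matrix.mul_assoc _ _ Uᴴ, hDD]

lemma re_trace_inv_add_smul_unitary_conj_diagonal (hU : U ∈ unitaryGroup n ℂ) (hl : ∀ i, 0 < l i)
    (hS : S = U * diagonal (fun i => (l i : ℂ)) * Uᴴ) {s : ℝ} (hs : 0 ≤ s) {p : n → ℝ}
    (hp : ∀ i, 0 ≤ p i) :
    ((S⁻¹ + (s : ℂ)⁻¹ • (U * diagonal (fun i => (p i : ℂ)) * Uᴴ))⁻¹.trace).re =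
      ∑ i, ((l i)⁻¹ + s⁻¹ * p i)⁻¹ := by
  have hsum : diagonal (fun i => (l i : ℂ)⁻¹) + (s : ℂ)⁻¹ • diagonal (fun i => (p i : ℂ)) =
      diagonal fun i => (((l i)⁻¹ + s⁻¹ * p i : ℝ) : ℂ) := by
    rw [← diagonal_smul, diagonal_add]
    push_cast
    rfl
  have hpos : ∀ i, 0 < (l i)⁻¹ + s⁻¹ * p i := fun i => by
    have := hl i; have := hp i; positivity
  rw [trace_inv_add_smul_unitary_conj hU (fun i => (hl i).ne') hS, hsum,
    inv_diagonal_of_ne_zero fun i => Complex.ofReal_ne_zero.mpr (hpos i).ne', trace_diagonal,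
    Complex.re_sum]
  simp only [← Complex.ofReal_inv, Complex.ofReal_re]

lemma trace_unitary_conj_diagonal_ofReal (hU : U ∈ unitaryGroup n ℂ) (p : n → ℝ) :
    (U * diagonal (fun i => (p i : ℂ)) * Uᴴ).trace = ((∑ i, p i : ℝ) : ℂ) := by
  rw [trace_unitary_conj hU, trace_diagonal, Complex.ofReal_sum]

lemma trace_mul_conjTranspose_and_re_trace_inv_of_diagonal_sqrt (hU : U ∈ unitaryGroup n ℂ)
    (hl : ∀ i, 0 < l i) (hS : S = U * diagonal (fun i => (l i : ℂ)) * Uᴴ) {s : ℝ} (hs : 0 ≤ s)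
    {p : n → ℝ} (hp : ∀ i, 0 ≤ p i) {Ψ : Matrix n m ℂ} (hΨ : Ψ * Ψᴴ = 1) :
    ((U * diagonal (fun i => (√(p i) : ℂ)) * Ψ) *
        (U * diagonal (fun i => (√(p i) : ℂ)) * Ψ)ᴴ).trace = ((∑ i, p i : ℝ) : ℂ) ∧
      ((S⁻¹ + (s : ℂ)⁻¹ • ((U * diagonal (fun i => (√(p i) : ℂ)) * Ψ) *
        (U * diagonal (fun i => (√(p i) : ℂ)) * Ψ)ᴴ))⁻¹.trace).re =
      ∑ i, ((l i)⁻¹ + s⁻¹ * p i)⁻¹ := by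
  rw [mul_conjTranspose_diagonal_sqrt_mul hp hΨ]
  exact ⟨trace_unitary_conj_diagonal_ofReal hU p,
    re_trace_inv_add_smul_unitary_conj_diagonal hU hl hS hs hp⟩

end Sensing

end Matrix

theorem stmt_9_general {N T : ℕ} (hT : N ≤ T)
    (U : Matrix (Fin N) (Fin N) ℂ) (hU : U ∈ Matrix.unitaryGroup (Fin N) ℂ)
    (l : Fin N → ℝ) (hl : ∀ i, 0 < l i)
    (S : Matrix (Fin N) (Fin N) ℂ)
    (hS : S = U * Matrix.diagonal (fun i => (l i : ℂ)) * Uᴴ)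
    (σ P₀ η : ℝ) (hσ : 0 < σ)
    (hη : ∑ i, max 0 (η - σ ^ 2 / l i) = T * N * P₀) :
    IsLeast {v : ℝ | ∃ X : Matrix (Fin N) (Fin T) ℂ,
        (X * Xᴴ).trace = ((T * N * P₀ : ℝ) : ℂ) ∧
        v = (((S⁻¹ + ((σ : ℂ) ^ 2)⁻¹ • (X * Xᴴ))⁻¹).trace).re}
      (∑ i, l i / (max 0 (l i * (σ ^ 2)⁻¹ * η - 1) + 1)) ∧
    ∀ Ψ : Matrix (Fin N) (Fin T) ℂ, Ψ * Ψᴴ = 1 →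
      ((U * Matrix.diagonal (fun i => (Real.sqrt (max 0 (η - σ ^ 2 / l i)) : ℂ)) * Ψ) *
          (U * Matrix.diagonal (fun i => (Real.sqrt (max 0 (η - σ ^ 2 / l i)) : ℂ)) * Ψ)ᴴ).trace
        = ((T * N * P₀ : ℝ) : ℂ) ∧
      (((S⁻¹ + ((σ : ℂ) ^ 2)⁻¹ •
          ((U * Matrix.diagonal (fun i => (Real.sqrt (max 0 (η - σ ^ 2 / l i)) : ℂ)) * Ψ) *
           (U * Matrix.diagonal (fun i => (Real.sqrt (max 0 (η - σ ^ 2 / l i)) : ℂ)) * Ψ)ᴴ))⁻¹).trace).re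
        = ∑ i, l i / (max 0 (l i * (σ ^ 2)⁻¹ * η - 1) + 1) := by
  have hs : 0 < σ ^ 2 := by positivity
  have hvalue : ∑ i, l i / (max 0 (l i * (σ ^ 2)⁻¹ * η - 1) + 1) =
      ∑ i, ((l i)⁻¹ + (σ ^ 2)⁻¹ * max 0 (η - σ ^ 2 / l i))⁻¹ :=
    sum_congr rfl fun i _ => (waterfill_value (hl i) hs η).symm
  have optimal : ∀ Ψ : Matrix (Fin N) (Fin T) ℂ, Ψ * Ψᴴ = 1 → _ := fun Ψ hΨ => by
    have h := trace_mul_conjTranspose_and_re_trace_inv_of_diagonal_sqrt hU hl hS hs.le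
      (fun i => le_max_left 0 (η - σ ^ 2 / l i)) hΨ
    rwa [hη, ← hvalue, Complex.ofReal_pow] at h
  obtain ⟨Ψ₀, hΨ₀⟩ : ∃ Ψ : Matrix (Fin N) (Fin T) ℂ, Ψ * Ψᴴ = 1 :=
    ⟨_, submatrix_one_mul_conjTranspose_self (Fin.castLE_injective hT)⟩
  refine ⟨⟨⟨_, (optimal Ψ₀ hΨ₀).1, (optimal Ψ₀ hΨ₀).2.symm⟩, ?_⟩, optimal⟩
  rintro v ⟨X, htrace, rfl⟩
  have hp : ∀ i, 0 ≤ (((Uᴴ * X) * (Uᴴ * X)ᴴ) i i).re := fun i =>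
    (Complex.nonneg_iff.mp (posSemidef_self_mul_conjTranspose _).diag_nonneg).1
  have hsum : ∑ i, (((Uᴴ * X) * (Uᴴ * X)ᴴ) i i).re = ∑ i, max 0 (η - σ ^ 2 / l i) := by
    rw [sum_re_diag_conjTranspose_mul_mul_conjTranspose hU, htrace, Complex.ofReal_re, hη]
  rw [hvalue, ← Complex.ofReal_pow]
  exact (sum_waterfill_le hl hs η hp hsum).trans (sum_inv_le_re_trace_inv hU hl hS hs.le X)

/-- Sensing-optimal waveform: the minimum over `X ∈ ℂ^{N×T}` (`T ≥ N`) of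
`Tr[(Σ⁻¹ + σ⁻² X X†)⁻¹]` subject to `Tr(X X†) = T·N·P₀` equals
`Σᵢ λᵢ/((λᵢ σ⁻² η − 1)⁺ + 1)`, where `Σ = UΛU†` with eigenvalues `λᵢ` and `η` satisfies
`Σᵢ (η − σ²/λᵢ)⁺ = T·N·P₀`; the minimum is achieved by `X = U P^{1/2} Ψ` with
`P = diag((η − σ²/λᵢ)⁺)` and any `Ψ` with orthonormal rows (`ΨΨ† = I`). -/
theorem stmt_9 {N T : ℕ} (hT : N ≤ T)
    (U : Matrix (Fin N) (Fin N) ℂ) (hU : U ∈ Matrix.unitaryGroup (Fin N) ℂ)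
    (l : Fin N → ℝ) (hl : ∀ i, 0 < l i)
    (S : Matrix (Fin N) (Fin N) ℂ)
    (hS : S = U * Matrix.diagonal (fun i => (l i : ℂ)) * Uᴴ)
    (σ P₀ η : ℝ) (hσ : 0 < σ) (hP₀ : 0 < P₀)
    (hη : ∑ i, max 0 (η - σ ^ 2 / l i) = T * N * P₀) :
    IsLeast {v : ℝ | ∃ X : Matrix (Fin N) (Fin T) ℂ,
        (X * Xᴴ).trace = ((T * N * P₀ : ℝ) : ℂ) ∧
        v = (((S⁻¹ + ((σ : ℂ) ^ 2)⁻¹ • (X * Xᴴ))⁻¹).trace).re}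
      (∑ i, l i / (max 0 (l i * (σ ^ 2)⁻¹ * η - 1) + 1)) ∧
    ∀ Ψ : Matrix (Fin N) (Fin T) ℂ, Ψ * Ψᴴ = 1 →
      ((U * Matrix.diagonal (fun i => (Real.sqrt (max 0 (η - σ ^ 2 / l i)) : ℂ)) * Ψ) *
          (U * Matrix.diagonal (fun i => (Real.sqrt (max 0 (η - σ ^ 2 / l i)) : ℂ)) * Ψ)ᴴ).trace
        = ((T * N * P₀ : ℝ) : ℂ) ∧
      (((S⁻¹ + ((σ : ℂ) ^ 2)⁻¹ •
          ((U * Matrix.diagonal (fun i => (Real.sqrt (max 0 (η - σ ^ 2 / l i)) : ℂ)) * Ψ) *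
           (U * Matrix.diagonal (fun i => (Real.sqrt (max 0 (η - σ ^ 2 / l i)) : ℂ)) * Ψ)ᴴ))⁻¹).trace).re
        = ∑ i, l i / (max 0 (l i * (σ ^ 2)⁻¹ * η - 1) + 1) :=
  stmt_9_general hT U hU l hl S hS σ P₀ η hσ hη
end
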